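/- Let G be a finite simple graph whose edge set carries a linear order, let e be the minimum edge of G, and let X be a subset of the edge set of G with e ∈ X. If X includes no broken circuit of G, then X \ {e} is contained in the edge set of the contracted graph G|_e; that is, for every f ∈ X with f ≠ e, there is no edge h of G with h > f such that {e, f, h} is the edge set of a triangle in G. -/
import Mathlib

attribute [-instance] Sym2.instPartialOrder


open SimpleGraph

/-- `B` is a broken circuit of the simple graph `G` (whose edges are compared via the
linear order on `Sym2 V`): `B` is obtained from the edge set of a cycle of `G` by
removing its maximum edge. -/
def IsBrokenCircuit {V : Type*} [LinearOrder (Sym2 V)] (G : SimpleGraph V)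
    (B : Set (Sym2 V)) : Prop :=
  ∃ (u : V) (w : G.Walk u u), w.IsCycle ∧
    ∃ fm ∈ w.edges, (∀ g ∈ w.edges, g ≤ fm) ∧ B = {g | g ∈ w.edges} \ {fm}

/-- `{e, f, h}` is the edge set of a triangle in `G`. -/
def IsTriangleEdges {V : Type*} (G : SimpleGraph V) (e f h : Sym2 V) : Prop :=
  ∃ x y z : V, G.Adj x y ∧ G.Adj y z ∧ G.Adj z x ∧
    e = s(x, y) ∧ f = s(y, z) ∧ h = s(z, x)

/-- If `e` is the minimum edge of a finite simple graph `G`, `X ⊆ E(G)` with `e ∈ X`,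
and `X` includes no broken circuit of `G`, then `X \ {e} ⊆ E(G|ₑ)`: for every
`f ∈ X` with `f ≠ e` there is no edge `h > f` such that `{e, f, h}` is the edge set
of a triangle in `G`. -/
theorem contraction_edge_subset {V : Type*} [Fintype V] [LinearOrder (Sym2 V)]
    (G : SimpleGraph V) (e : Sym2 V) (he : e ∈ G.edgeSet)
    (hmin : ∀ f ∈ G.edgeSet, e ≤ f)
    (X : Set (Sym2 V)) (hX : X ⊆ G.edgeSet) (heX : e ∈ X)
    (hnb : ¬ ∃ B, IsBrokenCircuit G B ∧ B ⊆ X) :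
    ∀ f ∈ X, f ≠ e → ∀ h : Sym2 V, f < h → ¬ IsTriangleEdges G e f h := by
  
  intro f hfX hfe h hfh htri
  obtain ⟨x, y, z, hxy, hyz, hzx, hexy, hfyz, hhzx⟩ := htri
  have hfE : f ∈ G.edgeSet := hX hfX
  have hef : e < f := lt_of_le_of_ne (hmin f hfE) (Ne.symm hfe)
  have heh : e < h := hef.trans hfh
  apply hnb
  set w : G.Walk x x :=
    SimpleGraph.Walk.cons hxy (SimpleGraph.Walk.cons hyz (SimpleGraph.Walk.cons hzx SimpleGraph.Walk.nil)) with hw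
  have hedges : w.edges = [e, f, h] := by
    simp [hw, hexy, hfyz, hhzx]
  have hcyc : w.IsCycle := by
    constructor
    · constructor
      · constructor
        rw [hedges]
        simp [hef.ne, heh.ne, hfh.ne]
      · simp [hw]
    · simp [hw, List.Nodup]
      exact ⟨⟨hyz.ne, fun hyx => hxy.ne (hyx.symm)⟩, hzx.ne⟩
  refine ⟨{g | g ∈ w.edges} \ {h}, ⟨x, w, hcyc, h, ?_, ?_, rfl⟩, ?_⟩
  · rw [hedges]; simp
  · intro g hg
    rw [hedges] at hg
    simp at hg
    rcases hg with rfl | rfl | rfl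
    · exact heh.le
    · exact hfh.le
    · exact le_rfl
  · intro g hg
    obtain ⟨hg1, hg2⟩ := hg
    rw [hedges] at hg1
    simp at hg1 hg2
    rcases hg1 with rfl | rfl | rfl
    · exact heX
    · exact hfX
    · exact absurd rfl hg2
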